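/- Let A be an m × m real matrix, B an m × k real matrix, C a k × m real matrix, D a k × k real matrix, and let x : ℝ → ℝᵐ and y : ℝ → ℝᵏ be differentiable functions satisfying the coupled block-linear system x′(t) = A · x(t) + B · y(t) and y′(t) = C · x(t) + D · y(t) for all t ∈ ℝ. Then for every t ∈ ℝ, x′(t) = A · x(t) + B · (exp(t • D) · y(0)) + B · ∫₀ᵗ exp((t − s) • D) · (C · x(s)) ds, where exp denotes the matrix exponential and · denotes matrix-vector multiplication. -/

import Mathlib

/-!
Variation of constants: along a solution of `y' = D y + f`, the function
`s ↦ exp (-s • D) y(s)` has derivative `exp (-s • D) f(s)`. Integrating over `[0, t]` and applying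
`exp (t • D)` gives `y(t) = exp (t • D) y(0) + ∫₀ᵗ exp ((t - s) • D) f(s) ds`; with `f = C x` this
is substituted into `x' = A x + B y`. The formula is proved for a bounded operator on a Banach
space and transported to matrices, which carry no canonical norm, along `Matrix.toCLMAlgEquiv'`.
-/

open scoped Matrix
open NormedSpace

theorem exp_smul_mul_exp_smul {𝔸 : Type*} [NormedRing 𝔸] [NormedAlgebra ℝ 𝔸] [CompleteSpace 𝔸]
    (a : 𝔸) (s t : ℝ) : exp (s • a) * exp (t • a) = exp ((s + t) • a) := by
  have hball : ∀ b : 𝔸, b ∈ Metric.eball (0 : 𝔸) (expSeries ℝ 𝔸).radius := fun b =>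
    (expSeries_radius_eq_top ℝ 𝔸).symm ▸ edist_lt_top _ _
  rw [add_smul, exp_add_of_commute_of_mem_ball (((Commute.refl a).smul_left s).smul_right t)
    (hball _) (hball _)]

namespace ContinuousLinearMap

variable {E : Type*} [NormedAddCommGroup E] [NormedSpace ℝ E] [CompleteSpace E]

theorem hasDerivAt_exp_neg_smul_apply (L : E →L[ℝ] E) {y : ℝ → E} {y' : E} {s : ℝ}
    (hy : HasDerivAt y y' s) :
    HasDerivAt (fun s => exp ((-s) • L) (y s)) (exp ((-s) • L) (y' - L (y s))) s := by
  have hexp : HasDerivAt (fun s : ℝ => exp ((-s) • L)) (-(exp ((-s) • L) * L)) s := by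
    simpa [Function.comp_def] using (hasDerivAt_exp_smul_const L (-s)).scomp s (hasDerivAt_neg s)
  convert hexp.clm_apply hy using 1
  simp [sub_eq_neg_add]

theorem eq_exp_smul_apply_add_integral (L : E →L[ℝ] E) {y f : ℝ → E}
    (hf : Continuous f) (hy : ∀ t, HasDerivAt y (L (y t) + f t) t) (t : ℝ) :
    y t = exp (t • L) (y 0) + ∫ s in (0 : ℝ)..t, exp ((t - s) • L) (f s) := by
  have hexp_cont : Continuous fun s : ℝ => exp (s • L) :=
    continuous_iff_continuousAt.2 fun s => (hasDerivAt_exp_smul_const L s).continuousAt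
  have hcont : Continuous fun s : ℝ => exp ((-s) • L) (f s) :=
    (hexp_cont.comp continuous_neg).clm_apply hf
  have hftc : ∫ s in (0 : ℝ)..t, exp ((-s) • L) (f s) = exp ((-t) • L) (y t) - y 0 := by
    have hderiv (s : ℝ) : HasDerivAt (fun s => exp ((-s) • L) (y s)) (exp ((-s) • L) (f s)) s := by
      simpa only [add_sub_cancel_left] using hasDerivAt_exp_neg_smul_apply L (hy s)
    rw [intervalIntegral.integral_eq_sub_of_hasDerivAt (fun s _ => hderiv s)
      (hcont.intervalIntegrable 0 t), neg_zero, zero_smul, exp_zero, one_apply_eq_self]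
  have hpull : exp (t • L) (∫ s in (0 : ℝ)..t, exp ((-s) • L) (f s))
      = ∫ s in (0 : ℝ)..t, exp ((t - s) • L) (f s) := by
    rw [← (exp (t • L)).intervalIntegral_comp_comm (hcont.intervalIntegrable 0 t)]
    simp only [← mul_apply_eq_comp, exp_smul_mul_exp_smul L, sub_eq_add_neg]
  have hcancel : exp (t • L) (exp ((-t) • L) (y t)) = y t := by
    rw [← mul_apply_eq_comp, exp_smul_mul_exp_smul L, add_neg_cancel, zero_smul, exp_zero,
      one_apply_eq_self]
  rw [← hpull, hftc, map_sub, hcancel, add_sub_cancel]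

end ContinuousLinearMap

namespace Matrix

variable {n : Type*} [Fintype n] [DecidableEq n]

noncomputable def toCLMAlgEquiv' : Matrix n n ℝ ≃ₐ[ℝ] ((n → ℝ) →L[ℝ] (n → ℝ)) :=
  toLinAlgEquiv'.trans (Module.End.toContinuousLinearMap (n → ℝ))

@[simp]
theorem toCLMAlgEquiv'_apply (M : Matrix n n ℝ) (v : n → ℝ) : toCLMAlgEquiv' M v = M *ᵥ v :=
  rfl

theorem continuous_toCLMAlgEquiv' : Continuous (toCLMAlgEquiv' : Matrix n n ℝ → _) :=
  (toCLMAlgEquiv' : Matrix n n ℝ ≃ₐ[ℝ] _).toLinearMap.continuous_of_finiteDimensional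

theorem exp_mulVec (M : Matrix n n ℝ) (v : n → ℝ) : exp M *ᵥ v = exp (toCLMAlgEquiv' M) v := by
  open scoped Norms.Operator in
  rw [← map_exp_of_mem_ball (𝕂 := ℝ) (𝔸 := Matrix n n ℝ) _ continuous_toCLMAlgEquiv' M
    ((expSeries_radius_eq_top ℝ (Matrix n n ℝ)).symm ▸ edist_lt_top _ _), toCLMAlgEquiv'_apply]
  -- the two sides compute `exp M` with the operator-norm and the product topology on matrices
  -- respectively; these agree definitionally
  rfl

theorem eq_exp_smul_mulVec_add_integral (D : Matrix n n ℝ) {y f : ℝ → n → ℝ}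
    (hf : Continuous f) (hy : ∀ t, HasDerivAt y (D *ᵥ y t + f t) t) (t : ℝ) :
    y t = exp (t • D) *ᵥ y 0 + ∫ s in (0 : ℝ)..t, exp ((t - s) • D) *ᵥ f s := by
  simp only [exp_mulVec, map_smul]
  exact (toCLMAlgEquiv' D).eq_exp_smul_apply_add_integral hf (by simpa using hy) t

end Matrix

/-- Mori–Zwanzig projection of the observable dynamics in the coupled block-linear
system `x' = A·x + B·y`, `y' = C·x + D·y`: the observable evolution decomposes into
an instantaneous term, an initial-condition term, and a convolution memory term. -/
theorem mori_zwanzig_observable_dynamics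
    (m k : ℕ)
    (A : Matrix (Fin m) (Fin m) ℝ) (B : Matrix (Fin m) (Fin k) ℝ)
    (C : Matrix (Fin k) (Fin m) ℝ) (D : Matrix (Fin k) (Fin k) ℝ)
    (x : ℝ → Fin m → ℝ) (y : ℝ → Fin k → ℝ)
    (hx : Differentiable ℝ x) (hy : Differentiable ℝ y)
    (hdx : ∀ t : ℝ, deriv x t = A *ᵥ x t + B *ᵥ y t)
    (hdy : ∀ t : ℝ, deriv y t = C *ᵥ x t + D *ᵥ y t) :
    ∀ t : ℝ, deriv x t = A *ᵥ x t + B *ᵥ (NormedSpace.exp (t • D) *ᵥ y 0)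
      + B *ᵥ ∫ s in (0:ℝ)..t, NormedSpace.exp ((t - s) • D) *ᵥ (C *ᵥ x s) := by
  intro t
  have hy' (t : ℝ) : HasDerivAt y (D *ᵥ y t + C *ᵥ x t) t := by
    simpa only [hdy, add_comm] using (hy t).hasDerivAt
  rw [hdx t, D.eq_exp_smul_mulVec_add_integral (continuous_const.matrix_mulVec hx.continuous) hy' t,
    Matrix.mulVec_add, add_assoc]
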